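/- Let D be a proper subdomain of a Banach space, x ≠ y ∈ D, and let γ be a λ-curve with endpoints x and y. Then for any two distinct points z₁, z₂ on γ, the subarc γ[z₁,z₂] is a 2λ-curve with endpoints z₁, z₂. -/

import Mathlib

open Set Metric MeasureTheory

noncomputable section

variable {E : Type*} [NormedAddCommGroup E]

/-- Distance from a point to the boundary (= complement) of `D`. -/
def dB (D : Set E) (z : E) : ℝ := Metric.infDist z Dᶜ

/-- `D` is a proper subdomain of the ambient space. -/
def IsProperDomain (D : Set E) : Prop := IsOpen D ∧ IsConnected D ∧ Dᶜ.Nonempty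

/-- A rectifiable arc inside `D`, parametrized by arclength on `[a,b]`. -/
structure IsArc (D : Set E) (γ : ℝ → E) (a b : ℝ) : Prop where
  le : a ≤ b
  lip : LipschitzOnWith 1 γ (Set.Icc a b)
  unit : ∀ s t, s ∈ Set.Icc a b → t ∈ Set.Icc a b → s ≤ t →
    eVariationOn γ (Set.Icc s t) = ENNReal.ofReal (t - s)
  mem : ∀ t ∈ Set.Icc a b, γ t ∈ D

/-- Quasihyperbolic length of the piece on `[a,b]` of an arclength-parametrized arc. -/
def qhLen (D : Set E) (γ : ℝ → E) (a b : ℝ) : ℝ := ∫ t in a..b, 1 / dB D (γ t)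

/-- The quasihyperbolic distance in `D`: infimum of quasihyperbolic lengths of
arcs joining the two points. -/
def qhDist (D : Set E) (x y : E) : ℝ :=
  sInf { L : ℝ | ∃ T : ℝ, ∃ γ : ℝ → E,
    IsArc D γ 0 T ∧ γ 0 = x ∧ γ T = y ∧ L = qhLen D γ 0 T }

/-- `γ` is a `c`-quasigeodesic in `D` on `[a,b]`. -/
def IsQuasigeodesicOn (D : Set E) (c : ℝ) (γ : ℝ → E) (a b : ℝ) : Prop :=
  IsArc D γ a b ∧ ∀ s t, s ∈ Set.Icc a b → t ∈ Set.Icc a b → s ≤ t →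
    qhLen D γ s t ≤ c * qhDist D (γ s) (γ t)

/-- The coefficient `c_{x,y}^λ = min (1 + λ/(2 k_D(x,y))) (9/8)`. -/
def cLam (D : Set E) (lam : ℝ) (x y : E) : ℝ :=
  min (1 + lam / (2 * qhDist D x y)) (9 / 8)

/-- `γ` is a `λ`-curve in `D` on `[a,b]`: a `c_{x,y}^λ`-quasigeodesic where `x,y`
are its endpoints. -/
def IsLamCurve (D : Set E) (lam : ℝ) (γ : ℝ → E) (a b : ℝ) : Prop :=
  IsQuasigeodesicOn D (cLam D lam (γ a) (γ b)) γ a b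

/-- `γ` is `h`-short in `D`. -/
def IsShort (D : Set E) (h : ℝ) (γ : ℝ → E) (a b : ℝ) : Prop :=
  IsArc D γ a b ∧ ∀ s t, s ∈ Set.Icc a b → t ∈ Set.Icc a b → s ≤ t →
    qhLen D γ s t ≤ qhDist D (γ s) (γ t) + h

/-- The point `w` lies within quasihyperbolic distance `C` of the union of the
two given sides. -/
def WithinOfSides (D : Set E) (C : ℝ) (w : E) (α : ℝ → E) (a b : ℝ)
    (α' : ℝ → E) (a' b' : ℝ) : Prop :=
  ∃ s : ℝ, (s ∈ Set.Icc a b ∧ qhDist D w (α s) ≤ C) ∨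
    (s ∈ Set.Icc a' b' ∧ qhDist D w (α' s) ≤ C)

/-- `(D, k_D)` is a `(C,h)`-Rips space: every side of an `h`-short triangle lies
in the `C`-neighbourhood of the two other sides. -/
def IsRips (D : Set E) (C h : ℝ) : Prop :=
  ∀ (α₁ α₂ α₃ : ℝ → E) (a₁ b₁ a₂ b₂ a₃ b₃ : ℝ),
    IsShort D h α₁ a₁ b₁ → IsShort D h α₂ a₂ b₂ → IsShort D h α₃ a₃ b₃ →
    α₁ b₁ = α₂ a₂ → α₂ b₂ = α₃ a₃ → α₃ b₃ = α₁ a₁ →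
    (∀ t ∈ Set.Icc a₁ b₁, WithinOfSides D C (α₁ t) α₂ a₂ b₂ α₃ a₃ b₃) ∧
    (∀ t ∈ Set.Icc a₂ b₂, WithinOfSides D C (α₂ t) α₃ a₃ b₃ α₁ a₁ b₁) ∧
    (∀ t ∈ Set.Icc a₃ b₃, WithinOfSides D C (α₃ t) α₁ a₁ b₁ α₂ a₂ b₂)

/-- `D` is `δ`-Gromov hyperbolic with respect to the quasihyperbolic metric. -/
def IsGromovHyp (D : Set E) (δ : ℝ) : Prop :=
  ∀ x ∈ D, ∀ y ∈ D, ∀ z ∈ D, ∀ p ∈ D,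
    min ((qhDist D p x + qhDist D p y - qhDist D x y) / 2)
        ((qhDist D p y + qhDist D p z - qhDist D y z) / 2) - δ ≤
      (qhDist D p x + qhDist D p z - qhDist D x z) / 2

/-- `μ` is a thin-triangles constant for triangles of `c₀`-quasigeodesics in `D`. -/
def ThinTriangles (D : Set E) (c₀ μ : ℝ) : Prop :=
  ∀ (γ₁ γ₂ γ₃ : ℝ → E) (a₁ b₁ a₂ b₂ a₃ b₃ : ℝ),
    IsQuasigeodesicOn D c₀ γ₁ a₁ b₁ → IsQuasigeodesicOn D c₀ γ₂ a₂ b₂ →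
    IsQuasigeodesicOn D c₀ γ₃ a₃ b₃ →
    γ₁ b₁ = γ₂ a₂ → γ₂ b₂ = γ₃ a₃ → γ₃ b₃ = γ₁ a₁ →
    ∀ t ∈ Set.Icc a₁ b₁, WithinOfSides D μ (γ₁ t) γ₂ a₂ b₂ γ₃ a₃ b₃

/-- `D` is a `c`-uniform domain. -/
def IsUniform (D : Set E) (c : ℝ) : Prop :=
  ∀ z₁ ∈ D, ∀ z₂ ∈ D, ∃ γ : ℝ → E, ∃ a b : ℝ, IsArc D γ a b ∧ γ a = z₁ ∧ γ b = z₂ ∧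
    (∀ t ∈ Set.Icc a b, min (t - a) (b - t) ≤ c * dB D (γ t)) ∧
    b - a ≤ c * ‖z₁ - z₂‖

/-- `D` is an `a`-John domain. -/
def IsJohn (D : Set E) (a : ℝ) : Prop :=
  ∀ z₁ ∈ D, ∀ z₂ ∈ D, ∃ γ : ℝ → E, ∃ s t : ℝ, IsArc D γ s t ∧ γ s = z₁ ∧ γ t = z₂ ∧
    ∀ u ∈ Set.Icc s t, min (u - s) (t - u) ≤ a * dB D (γ u)

/-- The inner (length) distance in `D`. -/
def innerDist (D : Set E) (x y : E) : ℝ :=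
  sInf { L : ℝ | ∃ γ : ℝ → E, ∃ s t : ℝ, IsArc D γ s t ∧ γ s = x ∧ γ t = y ∧ L = t - s }

/-- `γ` is an inner `b`-uniform curve in `D`. -/
def IsInnerUniformCurve (D : Set E) (b : ℝ) (γ : ℝ → E) (s t : ℝ) : Prop :=
  (∀ u ∈ Set.Icc s t, min (u - s) (t - u) ≤ b * dB D (γ u)) ∧
  t - s ≤ b * innerDist D (γ s) (γ t)

/-- `D` is an inner `b`-uniform domain. -/
def IsInnerUniform (D : Set E) (b : ℝ) : Prop :=
  ∀ z₁ ∈ D, ∀ z₂ ∈ D, ∃ γ : ℝ → E, ∃ s t : ℝ,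
    IsArc D γ s t ∧ γ s = z₁ ∧ γ t = z₂ ∧ IsInnerUniformCurve D b γ s t

/-- Length (total variation) of a curve on `[a,b]`. -/
def lenOn {F : Type*} [NormedAddCommGroup F] (γ : ℝ → F) (a b : ℝ) : ℝ :=
  (eVariationOn γ (Set.Icc a b)).toReal

variable {F : Type*} [NormedAddCommGroup F]

/-- `f` is a homeomorphism from `D` onto `D'`. -/
def IsHomeoOn (f : E → F) (D : Set E) (D' : Set F) : Prop :=
  ∃ g : F → E, ContinuousOn f D ∧ ContinuousOn g D' ∧ Set.MapsTo f D D' ∧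
    Set.MapsTo g D' D ∧ (∀ x ∈ D, g (f x) = x) ∧ (∀ y ∈ D', f (g y) = y)

/-- `f : D → D'` is `(M,C)`-coarsely quasihyperbolic. -/
def IsCQH (f : E → F) (D : Set E) (D' : Set F) (M C : ℝ) : Prop :=
  ∀ x ∈ D, ∀ y ∈ D,
    (qhDist D x y - C) / M ≤ qhDist D' (f x) (f y) ∧
    qhDist D' (f x) (f y) ≤ M * qhDist D x y + C

/- Proof idea: the quasihyperbolic distance between the endpoints of a subarc is at most its
quasihyperbolic length, hence at most the length of the whole `λ`-curve, hence at most
`(9/8) k_D(x,y) ≤ 2 k_D(x,y)`. Therefore `λ/(2 k_D(x,y)) ≤ 2λ/(2 k_D(z₁,z₂))`, so the coefficient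
`c^{2λ}_{z₁,z₂}` dominates `c^λ_{x,y}`, and the subarc inherits the quasigeodesic inequality. -/

lemma dB_pos {D : Set E} (hDo : IsOpen D) (hDc : Dᶜ.Nonempty) {z : E} (hz : z ∈ D) :
    0 < dB D z :=
  (hDo.isClosed_compl.notMem_iff_infDist_pos hDc).1 (not_not_intro hz)

lemma qhLen_nonneg (D : Set E) (γ : ℝ → E) {u v : ℝ} (huv : u ≤ v) : 0 ≤ qhLen D γ u v :=
  intervalIntegral.integral_nonneg huv fun _ _ => one_div_nonneg.2 Metric.infDist_nonneg

lemma qhDist_nonneg (D : Set E) (x y : E) : 0 ≤ qhDist D x y := by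
  apply Real.sInf_nonneg
  rintro L ⟨T, γ, hγ, -, -, rfl⟩
  exact qhLen_nonneg D γ hγ.le

lemma qhLen_comp_add_right (D : Set E) (γ : ℝ → E) (a b c : ℝ) :
    qhLen D (fun u => γ (u + c)) a b = qhLen D γ (a + c) (b + c) :=
  intervalIntegral.integral_comp_add_right (fun τ => 1 / dB D (γ τ)) c

lemma one_le_cLam (D : Set E) {lam : ℝ} (hlam : 0 ≤ lam) (x y : E) : 1 ≤ cLam D lam x y :=
  le_min (le_add_of_nonneg_right
    (div_nonneg hlam (mul_nonneg zero_le_two (qhDist_nonneg D x y)))) (by norm_num)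

lemma cLam_le_cLam_two_mul (D : Set E) {lam : ℝ} (hlam : 0 ≤ lam) {x y x' y' : E}
    (hpos : 0 < qhDist D x' y') (hle : qhDist D x' y' ≤ 2 * qhDist D x y) :
    cLam D lam x y ≤ cLam D (2 * lam) x' y' := by
  have hdiv : lam / (2 * qhDist D x y) ≤ 2 * lam / (2 * qhDist D x' y') := by
    rw [mul_div_mul_left lam _ two_ne_zero]
    exact div_le_div_of_nonneg_left hlam hpos hle
  exact min_le_min (add_le_add_right hdiv 1) le_rfl

namespace IsArc

variable {D : Set E} {γ : ℝ → E} {a b : ℝ}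

lemma mono (h : IsArc D γ a b) {s t : ℝ} (has : a ≤ s) (hst : s ≤ t) (htb : t ≤ b) :
    IsArc D γ s t := by
  have hsub : Icc s t ⊆ Icc a b := Icc_subset_Icc has htb
  exact ⟨hst, h.lip.mono hsub, fun p q hp hq => h.unit p q (hsub hp) (hsub hq),
    fun p hp => h.mem p (hsub hp)⟩

lemma comp_add_right {c : ℝ} (h : IsArc D γ (a + c) (b + c)) :
    IsArc D (fun u => γ (u + c)) a b := by
  have hshift : ∀ u ∈ Icc a b, u + c ∈ Icc (a + c) (b + c) := fun u hu =>
    ⟨add_le_add_left hu.1 c, add_le_add_left hu.2 c⟩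
  refine ⟨by simpa using h.le, fun p hp q hq => ?_, fun p q hp hq hpq => ?_,
    fun u hu => h.mem _ (hshift u hu)⟩
  · simpa using h.lip (hshift p hp) (hshift q hq)
  · have hmono : MonotoneOn (fun u : ℝ => u + c) (Icc p q) := fun _ _ _ _ hij => by simpa using hij
    rw [show (fun u => γ (u + c)) = γ ∘ (fun u : ℝ => u + c) from rfl,
      eVariationOn.comp_eq_of_monotoneOn γ _ hmono, image_add_const_Icc,
      h.unit _ _ (hshift p hp) (hshift q hq) (by simpa using hpq), add_sub_add_right_eq_sub]

lemma continuousOn_one_div_dB (h : IsArc D γ a b) (hDo : IsOpen D) (hDc : Dᶜ.Nonempty) :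
    ContinuousOn (fun τ => 1 / dB D (γ τ)) (Icc a b) :=
  continuousOn_const.div ((continuous_infDist_pt Dᶜ).comp_continuousOn h.lip.continuousOn)
    fun τ hτ => (dB_pos hDo hDc (h.mem τ hτ)).ne'

lemma qhLen_mono (h : IsArc D γ a b) (hDo : IsOpen D) (hDc : Dᶜ.Nonempty) {u v : ℝ}
    (hau : a ≤ u) (huv : u ≤ v) (hvb : v ≤ b) : qhLen D γ u v ≤ qhLen D γ a b :=
  intervalIntegral.integral_mono_interval hau huv hvb
    (Filter.Eventually.of_forall fun _ => one_div_nonneg.2 Metric.infDist_nonneg)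
    ((h.continuousOn_one_div_dB hDo hDc).intervalIntegrable_of_Icc h.le)

lemma qhDist_le_qhLen (h : IsArc D γ a b) : qhDist D (γ a) (γ b) ≤ qhLen D γ a b := by
  have hmem : qhLen D γ a b ∈ { L : ℝ | ∃ T : ℝ, ∃ γ' : ℝ → E,
      IsArc D γ' 0 T ∧ γ' 0 = γ a ∧ γ' T = γ b ∧ L = qhLen D γ' 0 T } := by
    refine ⟨b - a, fun u => γ (u + a), comp_add_right (by simpa using h), by simp, by simp, ?_⟩
    rw [qhLen_comp_add_right, zero_add, sub_add_cancel]
  refine csInf_le ⟨0, ?_⟩ hmem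
  rintro L ⟨T, γ', hγ', -, -, rfl⟩
  exact qhLen_nonneg D γ' hγ'.le

end IsArc

namespace IsQuasigeodesicOn

variable {D : Set E} {c : ℝ} {γ : ℝ → E} {a b : ℝ}

lemma mono (h : IsQuasigeodesicOn D c γ a b) {s t : ℝ} (has : a ≤ s) (hst : s ≤ t)
    (htb : t ≤ b) : IsQuasigeodesicOn D c γ s t := by
  have hsub : Icc s t ⊆ Icc a b := Icc_subset_Icc has htb
  exact ⟨h.1.mono has hst htb, fun u v hu hv => h.2 u v (hsub hu) (hsub hv)⟩

lemma mono_coeff (h : IsQuasigeodesicOn D c γ a b) {c' : ℝ} (hcc : c ≤ c') :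
    IsQuasigeodesicOn D c' γ a b :=
  ⟨h.1, fun u v hu hv huv =>
    (h.2 u v hu hv huv).trans (mul_le_mul_of_nonneg_right hcc (qhDist_nonneg D _ _))⟩

/-- A quasigeodesic whose endpoints are at quasihyperbolic distance `0` has quasihyperbolic
length `0`, so every nonnegative coefficient works for it. -/
lemma of_qhDist_eq_zero (h : IsQuasigeodesicOn D c γ a b) (hDo : IsOpen D)
    (hDc : Dᶜ.Nonempty) (h0 : qhDist D (γ a) (γ b) = 0) {c' : ℝ} (hc' : 0 ≤ c') :
    IsQuasigeodesicOn D c' γ a b := by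
  refine ⟨h.1, fun u v hu hv huv => ?_⟩
  calc qhLen D γ u v ≤ qhLen D γ a b := h.1.qhLen_mono hDo hDc hu.1 huv hv.2
    _ ≤ c * qhDist D (γ a) (γ b) := h.2 a b (left_mem_Icc.2 h.1.le) (right_mem_Icc.2 h.1.le) h.1.le
    _ = 0 := by rw [h0, mul_zero]
    _ ≤ c' * qhDist D (γ u) (γ v) := mul_nonneg hc' (qhDist_nonneg D _ _)

lemma qhDist_le_mul (h : IsQuasigeodesicOn D c γ a b) (hDo : IsOpen D) (hDc : Dᶜ.Nonempty)
    {s t : ℝ} (has : a ≤ s) (hst : s ≤ t) (htb : t ≤ b) :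
    qhDist D (γ s) (γ t) ≤ c * qhDist D (γ a) (γ b) :=
  calc qhDist D (γ s) (γ t) ≤ qhLen D γ s t := (h.1.mono has hst htb).qhDist_le_qhLen
    _ ≤ qhLen D γ a b := h.1.qhLen_mono hDo hDc has hst htb
    _ ≤ c * qhDist D (γ a) (γ b) :=
      h.2 a b (left_mem_Icc.2 h.1.le) (right_mem_Icc.2 h.1.le) h.1.le

end IsQuasigeodesicOn

theorem stmt5_general
    (D : Set E) (hD : IsProperDomain D) (lam : ℝ) (hlam₀ : 0 < lam)
    (γ : ℝ → E) (a b : ℝ) (hγ : IsLamCurve D lam γ a b)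
    (s t : ℝ) (hs : s ∈ Set.Icc a b) (ht : t ∈ Set.Icc a b) (hst : s < t) :
    IsLamCurve D (2 * lam) γ s t := by
  obtain ⟨hDo, -, hDc⟩ := hD
  have hsub : IsQuasigeodesicOn D (cLam D lam (γ a) (γ b)) γ s t := hγ.mono hs.1 hst.le ht.2
  rcases (qhDist_nonneg D (γ s) (γ t)).eq_or_lt with h0 | hpos
  · exact hsub.of_qhDist_eq_zero hDo hDc h0.symm
      (zero_le_one.trans (one_le_cLam D (by positivity) _ _))
  · refine hsub.mono_coeff (cLam_le_cLam_two_mul D hlam₀.le hpos ?_)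
    calc qhDist D (γ s) (γ t) ≤ cLam D lam (γ a) (γ b) * qhDist D (γ a) (γ b) :=
          hγ.qhDist_le_mul hDo hDc hs.1 hst.le ht.2
      _ ≤ 2 * qhDist D (γ a) (γ b) :=
          mul_le_mul_of_nonneg_right ((min_le_right _ _).trans (by norm_num))
            (qhDist_nonneg D _ _)

/-- Every subarc of a `λ`-curve is a `2λ`-curve. -/
theorem stmt5 [NormedSpace ℝ E] [CompleteSpace E]
    (D : Set E) (hD : IsProperDomain D) (lam : ℝ) (hlam₀ : 0 < lam) (hlam₁ : lam ≤ 1 / 2)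
    (x y : E) (hx : x ∈ D) (hy : y ∈ D) (hxy : x ≠ y)
    (γ : ℝ → E) (a b : ℝ) (hγ : IsLamCurve D lam γ a b) (ha : γ a = x) (hb : γ b = y)
    (s t : ℝ) (hs : s ∈ Set.Icc a b) (ht : t ∈ Set.Icc a b) (hst : s < t) :
    IsLamCurve D (2 * lam) γ s t :=
  stmt5_general D hD lam hlam₀ γ a b hγ s t hs ht hst

end
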